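/- arXiv:2401.07152 — 7 statements merged into one kernel-verified Lean document; each statement's English description precedes it below -/
import Mathlib

section
/- For any integers N > r > 0, the sequence s ↦ (1/s)·[C(N, r+1) − C(N−s, r+1)] is decreasing in s, for s ranging over positive integers with s ≤ N. -/
/-!
`C(N, r+1) - C(N-s, r+1)` telescopes into the sum of the first `s` decrements
`C(N-i, r+1) - C(N-(i+1), r+1)`, which decrease in `i` because `C(·, r+1)` is convex on `ℕ`
(truncated subtraction only makes the tail of decrements vanish). So the quantity divided by `s`
is the mean of the first `s` terms of an antitone sequence, and such means decrease.
-/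

open Finset

theorem Antitone.sum_range_succ_div_le {α : Type*} [Field α] [LinearOrder α]
    [IsStrictOrderedRing α] {a : ℕ → α} (ha : Antitone a) {s : ℕ} (hs : 0 < s) :
    (∑ i ∈ range (s + 1), a i) / (s + 1) ≤ (∑ i ∈ range s, a i) / s := by
  have hlast : (s : α) * a s ≤ ∑ i ∈ range s, a i := by
    simpa [nsmul_eq_mul] using
      card_nsmul_le_sum (range s) a (a s) fun i hi => ha (mem_range.1 hi).le
  rw [sum_range_succ, div_le_div_iff₀ (by positivity) (by exact_mod_cast hs)]
  linarith

theorem Nat.choose_tsub_sub_choose_tsub_succ (N k s : ℕ) :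
    ((N - s).choose (k + 1) : ℤ) - (N - (s + 1)).choose (k + 1) =
      if s < N then ((N - (s + 1)).choose k : ℤ) else 0 := by
  split_ifs with hs
  · rw [show N - s = N - (s + 1) + 1 by omega, Nat.choose_succ_succ]
    push_cast
    ring
  · rw [show N - s = 0 by omega, show N - (s + 1) = 0 by omega, sub_self]

theorem Nat.antitone_choose_tsub_sub_choose_tsub_succ (N k : ℕ) :
    Antitone fun s => ((N - s).choose k : ℤ) - (N - (s + 1)).choose k := by
  rcases k with _ | k
  · simp [antitone_const]
  refine antitone_nat_of_succ_le fun s => ?_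
  simp only [Nat.choose_tsub_sub_choose_tsub_succ]
  split_ifs with hs₁ hs
  · exact_mod_cast Nat.choose_le_choose k (by omega)
  · omega
  · positivity
  · exact le_rfl

theorem lto_A_decreasing_general (N r s : ℕ)
    (hs1 : 1 ≤ s) :
    ((N.choose (r + 1) : ℝ) - ((N - (s + 1)).choose (r + 1) : ℝ)) / (s + 1) ≤
      ((N.choose (r + 1) : ℝ) - ((N - s).choose (r + 1) : ℝ)) / s := by
  set c : ℕ → ℝ := fun t => ((N - t).choose (r + 1) : ℝ)
  have htelescope (t : ℕ) : (N.choose (r + 1) : ℝ) - (N - t).choose (r + 1) =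
      ∑ i ∈ range t, (c i - c (i + 1)) := by
    rw [sum_range_sub']
    simp [c]
  have hdecr : Antitone fun i => c i - c (i + 1) := fun i j hij => by
    have h := Nat.antitone_choose_tsub_sub_choose_tsub_succ N (r + 1) hij
    dsimp only [c] at h ⊢
    exact_mod_cast h
  rw [htelescope, htelescope]
  exact_mod_cast hdecr.sum_range_succ_div_le hs1

/-- For integers `N > r > 0`, the sequence `s ↦ (1/s) * (C(N, r+1) - C(N-s, r+1))`
is decreasing in `s` for `1 ≤ s < N`. -/
theorem lto_A_decreasing (N r s : ℕ) (hr : 0 < r) (hrN : r < N)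
    (hs1 : 1 ≤ s) (hsN : s < N) :
    ((N.choose (r + 1) : ℝ) - ((N - (s + 1)).choose (r + 1) : ℝ)) / (s + 1) ≤
      ((N.choose (r + 1) : ℝ) - ((N - s).choose (r + 1) : ℝ)) / s :=
  lto_A_decreasing_general N r s hs1
end

section
/- For integers N > s ≥ 1 and r ≥ 0, we have C(N−s, r+1) + s·C(N−1−s, r) ≤ C(N, r+1). -/
/-- By Pascal's rule, each step `m ↦ m + 1` raises `C(m, r + 1)` by `C(m, r) ≥ C(n, r)`. -/
theorem Nat.choose_succ_add_mul_choose_le (n s r : ℕ) :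
    (n + 1).choose (r + 1) + s * n.choose r ≤ (n + 1 + s).choose (r + 1) := by
  induction s with
  | zero => simp
  | succ s ih =>
    have hmono : n.choose r ≤ (n + 1 + s).choose r := Nat.choose_le_choose r (by omega)
    calc (n + 1).choose (r + 1) + (s + 1) * n.choose r
        = (n + 1).choose (r + 1) + s * n.choose r + n.choose r := by ring
      _ ≤ (n + 1 + s).choose (r + 1) + (n + 1 + s).choose r := by gcongr
      _ = (n + 1 + (s + 1)).choose (r + 1) := by
        rw [← add_assoc, Nat.choose_succ_succ, add_comm]

theorem choose_add_mul_le_general (N s r : ℕ) (hsN : s < N) :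
    (N - s).choose (r + 1) + s * (N - 1 - s).choose r ≤ N.choose (r + 1) := by
  obtain ⟨n, rfl⟩ : ∃ n, N = n + 1 + s := ⟨N - 1 - s, by omega⟩
  simpa [show n + 1 + s - s = n + 1 by omega, show n + 1 + s - 1 - s = n by omega]
    using Nat.choose_succ_add_mul_choose_le n s r

/-- For integers `N > s ≥ 1` and `r ≥ 0`,
`C(N-s, r+1) + s * C(N-1-s, r) ≤ C(N, r+1)`. -/
theorem choose_add_mul_le (N s r : ℕ) (hs1 : 1 ≤ s) (hsN : s < N) :
    (N - s).choose (r + 1) + s * (N - 1 - s).choose r ≤ N.choose (r + 1) :=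
  choose_add_mul_le_general N s r hsN
end

section
/- Let N ≥ 3 and let W : {triples of distinct elements of [N]} → [N] ∪ {⊥} be a 'winner' function such that W({i,j,k}) ∈ {i,j,k, ⊥} for each triple. For each unit k, let w(k) be the number of ordered pairs (i,j) of distinct units in [N]\{k} such that W({i,j,k}) = k; note w(k) is twice the number of triples containing k that k wins. Fix α ∈ (0,1) and call a unit k strange if w(k) ≥ (1−α)(N−1)(N−2). If S is the set of strange units and s = |S|, then (1−α)·s·(N−1)(N−2) ≤ s(s−1)(s−2)/3 + s(s−1)(N−s) + s(N−s)(N−1−s). -/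
open Finset

lemma cast_choose_two' (n : ℕ) : ((n.choose 2 : ℕ) : ℝ) = n * (n - 1) / 2 := by
  induction n with
  | zero => norm_num
  | succ m ih =>
    rw [Nat.choose_succ_succ]
    push_cast [ih, Nat.choose_one_right]
    ring

lemma cast_choose_three' (n : ℕ) : ((n.choose 3 : ℕ) : ℝ) = n * (n - 1) * (n - 2) / 6 := by
  induction n with
  | zero => norm_num
  | succ m ih =>
    rw [Nat.choose_succ_succ]
    push_cast [ih, cast_choose_two']
    ring

lemma vand3 (a b : ℕ) : (a + b).choose 3 = a.choose 3 + a.choose 2 * b + a * b.choose 2 + b.choose 3 := by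
  rw [Nat.add_choose_eq, Finset.Nat.sum_antidiagonal_eq_sum_range_succ_mk]
  simp [Finset.sum_range_succ, Nat.choose_one_right]
  ring


/-- Strange point bound for the naive LTO placebo test: if `W` assigns to each
3-element subset of `[N]` at most one winner from the subset, `w k` counts ordered
pairs `(i,j)` of distinct units different from `k` with `k` winning `{i,j,k}`, and
`S` is the set of units `k` with `w k ≥ (1-α)(N-1)(N-2)`, then with `s = |S|`,
`(1-α) s (N-1)(N-2) ≤ s(s-1)(s-2)/3 + s(s-1)(N-s) + s(N-s)(N-1-s)`. -/
theorem lto_strange_bound (N : ℕ) (hN : 3 ≤ N)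
    (W : Finset (Fin N) → Option (Fin N))
    (hW : ∀ t : Finset (Fin N), ∀ i : Fin N, W t = some i → i ∈ t)
    (α : ℝ) (hα0 : 0 < α) (hα1 : α < 1)
    (w : Fin N → ℕ)
    (hw : ∀ k : Fin N, w k =
      (Finset.univ.filter (fun p : Fin N × Fin N =>
        p.1 ≠ p.2 ∧ p.1 ≠ k ∧ p.2 ≠ k ∧ W {p.1, p.2, k} = some k)).card)
    (S : Finset (Fin N))
    (hS : S = Finset.univ.filter (fun k : Fin N =>
      (1 - α) * ((N : ℝ) - 1) * ((N : ℝ) - 2) ≤ (w k : ℝ)))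
    (s : ℕ) (hs : s = S.card) :
    (1 - α) * (s : ℝ) * ((N : ℝ) - 1) * ((N : ℝ) - 2) ≤
      (s : ℝ) * ((s : ℝ) - 1) * ((s : ℝ) - 2) / 3
        + (s : ℝ) * ((s : ℝ) - 1) * ((N : ℝ) - (s : ℝ))
        + (s : ℝ) * ((N : ℝ) - (s : ℝ)) * ((N : ℝ) - 1 - (s : ℝ)) := by
  subst hs
  have hsN : S.card ≤ N := by simpa using S.card_le_univ
  -- Step 1: lower bound the sum of w over S
  have h1 : (1 - α) * (S.card : ℝ) * ((N:ℝ) - 1) * ((N:ℝ) - 2) ≤ ∑ k ∈ S, (w k : ℝ) := by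
    have hb : ∀ k ∈ S, (1 - α) * ((N:ℝ) - 1) * ((N:ℝ) - 2) ≤ (w k : ℝ) := by
      intro k hk; rw [hS, mem_filter] at hk; exact hk.2
    have := Finset.card_nsmul_le_sum S (fun k => (w k : ℝ)) _ hb
    rw [nsmul_eq_mul] at this
    calc (1 - α) * (S.card : ℝ) * ((N:ℝ) - 1) * ((N:ℝ) - 2)
        = (S.card : ℝ) * ((1 - α) * ((N:ℝ) - 1) * ((N:ℝ) - 2)) := by ring
      _ ≤ _ := this
  -- The set of ordered triples counted by the sum
  set P : Finset (Fin N × Fin N × Fin N) := univ.filter (fun x =>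
    x.2.2 ∈ S ∧ x.1 ≠ x.2.1 ∧ x.1 ≠ x.2.2 ∧ x.2.1 ≠ x.2.2 ∧
      W {x.1, x.2.1, x.2.2} = some x.2.2) with hP
  -- Step 2: the sum equals |P|
  have h2 : ∑ k ∈ S, w k = P.card := by
    rw [Finset.card_eq_sum_card_fiberwise (f := fun x => x.2.2) (t := S)
      (fun x hx => (mem_filter.mp hx).2.1)]
    refine Finset.sum_congr rfl (fun k hk => ?_)
    rw [hw k]
    apply Finset.card_bij (fun p _ => (p.1, p.2, k))
    · intro p hp
      simp only [mem_filter, mem_univ, true_and] at hp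
      simp only [hP, mem_filter, mem_univ, true_and]
      exact ⟨⟨hk, hp.1, hp.2.1, hp.2.2.1, hp.2.2.2⟩, trivial⟩
    · intro p hp q hq hpq
      simp only [Prod.mk.injEq] at hpq
      exact Prod.ext hpq.1 hpq.2.1
    · intro x hx
      simp only [hP, mem_filter, mem_univ, true_and] at hx
      obtain ⟨⟨hkS, ha, hb, hc, hd⟩, hk2⟩ := hx
      subst hk2
      refine ⟨(x.1, x.2.1), ?_, rfl⟩
      simp only [mem_filter, mem_univ, true_and]
      exact ⟨ha, hb, hc, hd⟩
  -- Step 3: |P| ≤ 2 * |T|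
  set T : Finset (Finset (Fin N)) :=
    (powersetCard 3 (univ : Finset (Fin N))).filter (fun t => ∃ x ∈ t, x ∈ S) with hT
  have h3 : P.card ≤ 2 * T.card := by
    have hcard : P.card ≤ (T ×ˢ (univ : Finset Bool)).card := by
      apply Finset.card_le_card_of_injOn
        (fun x => (({x.1, x.2.1, x.2.2} : Finset (Fin N)), decide (x.1 < x.2.1)))
      · intro x hx
        simp only [hP, Finset.mem_coe, mem_filter, mem_univ, true_and] at hx
        obtain ⟨hkS, hij, hik, hjk, hwin⟩ := hx
        simp only [Finset.mem_coe, Finset.mem_product, hT, mem_filter, Finset.mem_powersetCard, Finset.mem_univ,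
          and_true]
        refine ⟨⟨Finset.subset_univ _, ?_⟩, x.2.2, by simp, hkS⟩
        rw [Finset.card_insert_of_notMem (by simp [hij, hik]),
          Finset.card_insert_of_notMem (by simp [hjk]), Finset.card_singleton]
      · rintro ⟨i, j, k⟩ hx ⟨i', j', k'⟩ hy hxy
        simp only [hP, mem_filter, mem_univ, true_and, coe_filter, Set.mem_setOf_eq] at hx hy
        obtain ⟨hkS, hij, hik, hjk, hwin⟩ := hx
        obtain ⟨hkS', hij', hik', hjk', hwin'⟩ := hy
        simp only [Prod.mk.injEq] at hxy
        obtain ⟨hteq, hbeq⟩ := hxy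
        have hkk : k = k' := by
          rw [hteq, hwin'] at hwin
          exact (Option.some.inj hwin).symm
        subst hkk
        have hi' : i' = i ∨ i' = j := by
          have : i' ∈ ({i, j, k} : Finset (Fin N)) := by
            rw [hteq]; simp
          simp only [Finset.mem_insert, Finset.mem_singleton] at this
          rcases this with h | h | h
          · exact Or.inl h
          · exact Or.inr h
          · exact absurd h hik'
        have hj' : j' = i ∨ j' = j := by
          have : j' ∈ ({i, j, k} : Finset (Fin N)) := by
            rw [hteq]; simp
          simp only [Finset.mem_insert, Finset.mem_singleton] at this
          rcases this with h | h | h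
          · exact Or.inl h
          · exact Or.inr h
          · exact absurd h hjk'
        have hb : (i < j) ↔ (i' < j') := by
          simpa [decide_eq_decide] using hbeq
        rcases hi' with hi1 | hi1 <;> rcases hj' with hj1 | hj1
        · exact absurd (hj1 ▸ hi1 ▸ rfl : i' = j') hij'
        · subst hi1; subst hj1; rfl
        · subst hi1; subst hj1
          rcases lt_or_gt_of_ne hij with h | h
          · exact absurd (hb.mp h) (lt_asymm h)
          · exact absurd (hb.mpr h) (lt_asymm h)
        · exact absurd (hj1 ▸ hi1 ▸ rfl : i' = j') hij'
    rw [Finset.card_product] at hcard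
    simpa [two_mul, mul_comm] using hcard
  -- Step 4: |T| = C(N,3) - C(N-s,3)
  have h4 : T.card + (N - S.card).choose 3 = N.choose 3 := by
    have hcompl : (powersetCard 3 (univ : Finset (Fin N))).filter
        (fun t => ¬ ∃ x ∈ t, x ∈ S) = powersetCard 3 (univ \ S) := by
      ext t
      simp only [mem_filter, Finset.mem_powersetCard, Finset.subset_univ, true_and,
        Finset.subset_iff, Finset.mem_sdiff, Finset.mem_univ, not_exists, not_and]
      tauto
    have hsplit := Finset.card_filter_add_card_filter_not
      (s := powersetCard 3 (univ : Finset (Fin N))) (p := fun t => ∃ x ∈ t, x ∈ S)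
    rw [hcompl, Finset.card_powersetCard, Finset.card_powersetCard] at hsplit
    simpa [Finset.card_sdiff_of_subset (Finset.subset_univ S), Finset.card_univ] using hsplit
  -- combine in ℕ
  have h5 : T.card = S.card.choose 3 + S.card.choose 2 * (N - S.card)
      + S.card * (N - S.card).choose 2 := by
    have hv := vand3 S.card (N - S.card)
    rw [Nat.add_sub_cancel' hsN] at hv
    omega
  -- finish in ℝ
  have hm : ((N - S.card : ℕ) : ℝ) = (N : ℝ) - S.card := by
    exact Nat.cast_sub hsN
  have h6 : (∑ k ∈ S, (w k : ℝ)) ≤ 2 * (T.card : ℝ) := by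
    have h : ∑ k ∈ S, w k ≤ 2 * T.card := by rw [h2]; exact h3
    have h' := (Nat.cast_le (α := ℝ)).mpr h
    push_cast at h'
    exact h'
  have h7 : (2 : ℝ) * T.card =
      (S.card : ℝ) * ((S.card : ℝ) - 1) * ((S.card : ℝ) - 2) / 3
        + (S.card : ℝ) * ((S.card : ℝ) - 1) * ((N : ℝ) - (S.card : ℝ))
        + (S.card : ℝ) * ((N : ℝ) - (S.card : ℝ)) * ((N : ℝ) - 1 - (S.card : ℝ)) := by
    rw [h5]
    push_cast [cast_choose_three', cast_choose_two', hm]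
    ring
  linarith [h1, h6, h7.ge, h7.le]
end

section
/- Rank-sum strange point bound: Let N ≥ 3 and for each ordered triple of distinct units (i,j,k) in [N] let I{i ≻ j} ∈ {0,1} be indicators with the property that, within each unordered triple {i,j,k}, the sum of the six indicators I{i≻j} + I{i≻k} + I{j≻i} + I{j≻k} + I{k≻i} + I{k≻j} is at most 3, and for i,j ∈ S, k ∉ S the sum I{i≻j}+I{i≻k}+I{j≻i}+I{j≻k} is at most 3. Fix α ∈ (0,1) and call unit i strange if Σ_{j≠k, j,k ∈ [N]\{i}} (1/2)(I{i≻j} + I{i≻k}) ≥ (1 − α/2)(N−1)(N−2). Then the number s of strange units satisfies s ≤ ⌊(N−1)α⌋ + 1. -/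
/-!
A strange unit beats at least `(1 - α/2)(N - 1)` others, so the `s` strange units win at least
`s (1 - α/2)(N - 1)` comparisons in total. Conversely, the triple condition says that
`b i j + b j i` summed over the three pairs of a triple is at most `3`, so by double counting over
triples the strange units win at most `s (s - 1) / 2` comparisons among themselves, plus at most
`s (N - s)` against the rest. (For `s = 2` the first bound fails, but two units that beat each
other jointly beat every third unit at most once, which gives the same total.) Comparing the two
bounds gives `s - 1 ≤ (N - 1) α`.
-/

open Finset

namespace Finset

variable {ι : Type*} [DecidableEq ι]

section AddCommMonoid

variable {M : Type*} [AddCommMonoid M]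

theorem sum_sum_erase_comm (s : Finset ι) (F : ι → ι → M) :
    ∑ i ∈ s, ∑ j ∈ s.erase i, F j i = ∑ i ∈ s, ∑ j ∈ s.erase i, F i j :=
  sum_comm' fun i j => by simp only [mem_erase]; grind

theorem sum_sum_erase_left (s : Finset ι) (f : ι → M) :
    ∑ i ∈ s, ∑ _j ∈ s.erase i, f i = (#s - 1) • ∑ i ∈ s, f i := by
  rw [smul_sum]
  exact sum_congr rfl fun i hi => by rw [sum_const, card_erase_of_mem hi]

theorem sum_sum_erase_right (s : Finset ι) (f : ι → M) :
    ∑ i ∈ s, ∑ j ∈ s.erase i, f j = (#s - 1) • ∑ i ∈ s, f i := by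
  rw [sum_sum_erase_comm s fun i _ => f i, sum_sum_erase_left]

theorem sum_offDiag_eq_sum_sum_erase (s : Finset ι) (f : ι × ι → M) :
    ∑ p ∈ s.offDiag, f p = ∑ i ∈ s, ∑ j ∈ s.erase i, f (i, j) :=
  sum_finset_product _ _ _ fun p => by simp only [mem_offDiag, mem_erase]; grind

theorem sum_triangles_eq_nsmul_sum_pairs (s : Finset ι) (g : ι → ι → M) :
    ∑ i ∈ s, ∑ j ∈ s.erase i, ∑ k ∈ (s.erase i).erase j, (g i j + g i k + g j k) =
      3 • (#s - 2) • ∑ i ∈ s, ∑ j ∈ s.erase i, g i j := by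
  have h_ij : ∑ i ∈ s, ∑ j ∈ s.erase i, ∑ _k ∈ (s.erase i).erase j, g i j =
      (#s - 2) • ∑ i ∈ s, ∑ j ∈ s.erase i, g i j := by
    simp only [smul_sum]
    refine sum_congr rfl fun i hi => sum_congr rfl fun j hj => ?_
    rw [sum_const, card_erase_of_mem hj, card_erase_of_mem hi, Nat.sub_sub]
  have h_ik : ∑ i ∈ s, ∑ j ∈ s.erase i, ∑ k ∈ (s.erase i).erase j, g i k =
      ∑ i ∈ s, ∑ j ∈ s.erase i, ∑ _k ∈ (s.erase i).erase j, g i j :=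
    sum_congr rfl fun i _ => (sum_sum_erase_comm _ fun _ k => g i k).symm
  have h_jk : ∑ i ∈ s, ∑ j ∈ s.erase i, ∑ k ∈ (s.erase i).erase j, g j k =
      ∑ i ∈ s, ∑ j ∈ s.erase i, ∑ k ∈ (s.erase i).erase j, g i k := by
    rw [← sum_sum_erase_comm s]
    exact sum_congr rfl fun i _ => sum_congr rfl fun j _ => by rw [erase_right_comm]
  simp only [sum_add_distrib, h_jk, h_ik, h_ij]
  abel

end AddCommMonoid

theorem sum_sum_erase_le_of_triangle (s : Finset ι) (p : ι → ι → ℕ) (hs : 3 ≤ #s)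
    (hp : ∀ i ∈ s, ∀ j ∈ s, ∀ k ∈ s, i ≠ j → i ≠ k → j ≠ k → p i j + p i k + p j k ≤ 3) :
    ∑ i ∈ s, ∑ j ∈ s.erase i, p i j ≤ #s * (#s - 1) := by
  have h : 3 • (#s - 2) • ∑ i ∈ s, ∑ j ∈ s.erase i, p i j ≤
      3 • (#s - 2) • ∑ i ∈ s, ∑ j ∈ s.erase i, 1 := by
    rw [← sum_triangles_eq_nsmul_sum_pairs, ← sum_triangles_eq_nsmul_sum_pairs]
    refine sum_le_sum fun i hi => sum_le_sum fun j hj => sum_le_sum fun k hk => ?_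
    simp only [mem_erase] at hj hk
    exact hp i hi j hj.2 k hk.2.2 hj.1.symm hk.2.1.symm hk.1.symm
  rw [sum_sum_erase_right] at h
  simp only [sum_const, smul_eq_mul, mul_one] at h
  rw [mul_comm]
  exact Nat.le_of_mul_le_mul_left (Nat.le_of_mul_le_mul_left h (by omega)) (by omega)

theorem sum_offDiag_add {R : Type*} [CommRing R] (s : Finset ι) (f : ι → R) :
    ∑ p ∈ s.offDiag, (f p.1 + f p.2) = 2 * ((#s : R) - 1) * ∑ i ∈ s, f i := by
  rcases s.eq_empty_or_nonempty with rfl | hs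
  · simp
  rw [sum_offDiag_eq_sum_sum_erase]
  simp only [sum_add_distrib, sum_sum_erase_left, sum_sum_erase_right, nsmul_eq_mul,
    Nat.cast_sub (card_pos.2 hs), Nat.cast_one]
  ring

end Finset

section Wins

variable {ι : Type*} [Fintype ι] [DecidableEq ι] (b : ι → ι → ℕ)

def wins (i : ι) : ℕ := ∑ j ∈ univ.erase i, b i j

theorem sum_wins_eq (S : Finset ι) :
    ∑ i ∈ S, wins b i = ∑ i ∈ S, ∑ j ∈ S.erase i, b i j + ∑ i ∈ S, ∑ j ∈ Sᶜ, b i j := by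
  rw [← sum_add_distrib]
  refine sum_congr rfl fun i hi => ?_
  have h_univ := add_sum_erase univ (b i) (mem_univ i)
  have h_S := add_sum_erase S (b i) hi
  have h_compl := sum_add_sum_compl S (b i)
  unfold wins
  omega

theorem sum_offDiag_erase_half_add_eq_mul_wins (i : ι) :
    ∑ p ∈ univ.filter (fun p : ι × ι => p.1 ≠ p.2 ∧ p.1 ≠ i ∧ p.2 ≠ i),
        (1 / 2 : ℝ) * ((b i p.1 : ℝ) + (b i p.2 : ℝ)) =
      ((Fintype.card ι : ℝ) - 2) * wins b i := by
  have h_pairs : univ.filter (fun p : ι × ι => p.1 ≠ p.2 ∧ p.1 ≠ i ∧ p.2 ≠ i) =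
      (univ.erase i).offDiag := by
    ext p
    simp only [mem_filter, mem_univ, true_and, mem_offDiag, mem_erase]
    tauto
  rw [h_pairs, ← mul_sum, sum_offDiag_add _ fun j => (b i j : ℝ),
    card_erase_of_mem (mem_univ i), card_univ, Nat.cast_sub (Fintype.card_pos_iff.2 ⟨i⟩), wins,
    Nat.cast_sum]
  ring

variable {b}

theorem wins_add_wins_add_three_le (hb01 : ∀ i j, b i j ≤ 1)
    (htriple : ∀ i j k, i ≠ j → j ≠ k → i ≠ k →
      b i j + b i k + b j i + b j k + b k i + b k j ≤ 3)
    (hn : 3 ≤ Fintype.card ι) {i j : ι} (hij : i ≠ j) :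
    wins b i + wins b j + 3 ≤ 2 * Fintype.card ι := by
  have hR : #((univ.erase i).erase j) = Fintype.card ι - 2 := by
    rw [card_erase_of_mem (mem_erase.2 ⟨hij.symm, mem_univ j⟩), card_erase_of_mem (mem_univ i),
      card_univ, Nat.sub_sub]
  have h_split : wins b i + wins b j =
      b i j + b j i + ∑ k ∈ (univ.erase i).erase j, (b i k + b j k) := by
    have h_i := add_sum_erase (univ.erase i) (b i) (mem_erase.2 ⟨hij.symm, mem_univ j⟩)
    have h_j := add_sum_erase (univ.erase j) (b j) (mem_erase.2 ⟨hij, mem_univ i⟩)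
    rw [erase_right_comm] at h_j
    rw [sum_add_distrib]
    unfold wins
    omega
  have h_bound : ∀ m, (∀ k ∈ (univ.erase i).erase j, b i k + b j k ≤ m) →
      wins b i + wins b j ≤ b i j + b j i + #((univ.erase i).erase j) * m := fun m hm => by
    rw [h_split, ← smul_eq_mul]
    exact Nat.add_le_add_left (sum_le_card_nsmul _ _ m hm) _
  have h_third : ∀ k ∈ (univ.erase i).erase j, b i j + b j i + (b i k + b j k) ≤ 3 :=
    fun k hk => by
      obtain ⟨hkj, hki, -⟩ := mem_erase.1 hk |>.imp_right mem_erase.1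
      have := htriple i j k hij (Ne.symm hkj) (Ne.symm hki)
      omega
  -- If `i` and `j` beat each other, then together they beat each other unit at most once.
  by_cases hp : b i j + b j i ≤ 1
  · have := h_bound 2 fun k _ => Nat.add_le_add (hb01 i k) (hb01 j k)
    omega
  · have := h_bound 1 fun k hk => by have := h_third k hk; omega
    have := hb01 i j
    have := hb01 j i
    omega

theorem two_mul_sum_wins_add_le (hb01 : ∀ i j, b i j ≤ 1)
    (htriple : ∀ i j k, i ≠ j → j ≠ k → i ≠ k →
      b i j + b i k + b j i + b j k + b k i + b k j ≤ 3)
    (hn : 3 ≤ Fintype.card ι) {S : Finset ι} (hS : 2 ≤ #S) :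
    2 * ∑ i ∈ S, wins b i + #S * (#S + 1) ≤ 2 * #S * Fintype.card ι := by
  rcases hS.eq_or_lt with hS | hS
  · obtain ⟨i, j, hij, rfl⟩ := card_eq_two.1 hS.symm
    rw [sum_pair hij, ← hS]
    have := wins_add_wins_add_three_le hb01 htriple hn hij
    omega
  have h_inside : 2 * ∑ i ∈ S, ∑ j ∈ S.erase i, b i j ≤ #S * (#S - 1) := by
    have := sum_sum_erase_le_of_triangle S (fun i j => b i j + b j i) hS
      fun i _ j _ k _ hij hik hjk => by have := htriple i j k hij hjk hik; omega
    rwa [sum_congr rfl fun i _ => sum_add_distrib, sum_add_distrib, sum_sum_erase_comm S b,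
      ← two_mul] at this
  have h_outside : ∑ i ∈ S, ∑ j ∈ Sᶜ, b i j ≤ #S * #Sᶜ := by
    simpa using sum_le_card_nsmul S _ _ fun i _ =>
      sum_le_card_nsmul Sᶜ (b i) 1 fun j _ => hb01 i j
  have h_sq : #S * (#S - 1) + #S * (#S + 1) = 2 * #S * #S := by
    rw [← mul_add, show #S - 1 + (#S + 1) = 2 * #S by omega, mul_comm]
  rw [sum_wins_eq, ← card_add_card_compl S]
  linarith

end Wins

theorem ranksum_strange_bound_general (N : ℕ) (hN : 3 ≤ N)
    (b : Fin N → Fin N → ℕ) (hb01 : ∀ i j : Fin N, b i j ≤ 1)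
    (α : ℝ) (hα0 : 0 < α)
    (S : Finset (Fin N))
    (hS : S = Finset.univ.filter (fun i : Fin N =>
      (1 - α / 2) * ((N : ℝ) - 1) * ((N : ℝ) - 2) ≤
        ∑ p ∈ Finset.univ.filter (fun p : Fin N × Fin N =>
          p.1 ≠ p.2 ∧ p.1 ≠ i ∧ p.2 ≠ i),
          (1 / 2 : ℝ) * ((b i p.1 : ℝ) + (b i p.2 : ℝ))))
    (htriple : ∀ i j k : Fin N, i ≠ j → j ≠ k → i ≠ k →
      b i j + b i k + b j i + b j k + b k i + b k j ≤ 3)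
    (s : ℕ) (hs : s = S.card) :
    (s : ℤ) ≤ ⌊((N : ℝ) - 1) * α⌋ + 1 := by
  subst hs
  have hN' : (3 : ℝ) ≤ N := by exact_mod_cast hN
  have h_strange : ∀ i ∈ S, (1 - α / 2) * ((N : ℝ) - 1) ≤ wins b i := fun i hi => by
    rw [hS, mem_filter, sum_offDiag_erase_half_add_eq_mul_wins, Fintype.card_fin] at hi
    exact le_of_mul_le_mul_right (hi.2.trans_eq (mul_comm _ _)) (by linarith)
  rcases lt_or_ge #S 2 with h_small | h_two
  · have := Int.floor_nonneg.2 (mul_nonneg (by linarith) hα0.le : (0 : ℝ) ≤ (N - 1) * α)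
    omega
  have h_upper : 2 * ∑ i ∈ S, (wins b i : ℝ) + #S * (#S + 1) ≤ 2 * #S * N := by
    have := two_mul_sum_wins_add_le hb01 htriple (by simpa using hN) h_two
    rw [Fintype.card_fin] at this
    exact_mod_cast this
  have h_lower := card_nsmul_le_sum S _ _ h_strange
  rw [nsmul_eq_mul] at h_lower
  have h_pos : (0 : ℝ) < #S := by exact_mod_cast (by omega : 0 < #S)
  have key : ((#S - 1 : ℤ) : ℝ) ≤ ((N : ℝ) - 1) * α := by
    push_cast
    nlinarith
  have := Int.le_floor.2 key
  omega

/-- Rank-sum strange point bound: with pairwise comparison indicators `b i j ∈ {0,1}`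
such that within each unordered triple the six indicators sum to at most 3 and, for
strange `i, j` and non-strange `k`, the four indicators `b i j + b i k + b j i + b j k`
sum to at most 3, the number `s` of strange units (units `i` with
`∑_{j≠k, j,k ≠ i} (1/2)(b i j + b i k) ≥ (1 - α/2)(N-1)(N-2)`) satisfies
`s ≤ ⌊(N-1)α⌋ + 1`. -/
theorem ranksum_strange_bound (N : ℕ) (hN : 3 ≤ N)
    (b : Fin N → Fin N → ℕ) (hb01 : ∀ i j : Fin N, b i j ≤ 1)
    (α : ℝ) (hα0 : 0 < α) (hα1 : α < 1)
    (S : Finset (Fin N))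
    (hS : S = Finset.univ.filter (fun i : Fin N =>
      (1 - α / 2) * ((N : ℝ) - 1) * ((N : ℝ) - 2) ≤
        ∑ p ∈ Finset.univ.filter (fun p : Fin N × Fin N =>
          p.1 ≠ p.2 ∧ p.1 ≠ i ∧ p.2 ≠ i),
          (1 / 2 : ℝ) * ((b i p.1 : ℝ) + (b i p.2 : ℝ))))
    (htriple : ∀ i j k : Fin N, i ≠ j → j ≠ k → i ≠ k →
      b i j + b i k + b j i + b j k + b k i + b k j ≤ 3)
    (hfour : ∀ i j k : Fin N, i ≠ j → j ≠ k → i ≠ k → i ∈ S → j ∈ S → k ∉ S →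
      b i j + b i k + b j i + b j k ≤ 3)
    (s : ℕ) (hs : s = S.card) :
    (s : ℤ) ≤ ⌊((N : ℝ) - 1) * α⌋ + 1 :=
  ranksum_strange_bound_general N hN b hb01 α hα0 S hS htriple s hs
end

section
/- Leave-r-out strange point bound: Let N > r ≥ 1 and let W assign to each (r+1)-element subset of [N] at most one winner from that subset. For unit i₀, let w(i₀) count the ordered r-tuples (i₁,…,i_r) of distinct units in [N]\{i₀} such that i₀ is the winner of {i₀,i₁,…,i_r}. Fix α ∈ (0, r/(r+1)) and call i₀ strange if w(i₀) ≥ (1−α)·(N−1)!/(N−r−1)!. If s is the number of strange units, then (1−α)·s·(N−1)!/(N−r−1)! ≤ r!·[C(N, r+1) − C(N−s, r+1)]. -/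
/-!
A winning tuple of `i₀` spans, together with `i₀`, an `(r+1)`-set won by `i₀`, and each such set
is spanned by exactly `r!` tuples; hence `w i₀ ≤ r! · #(sets won by i₀)`. Since a set has at most
one winner, the sets won by the strange units are pairwise distinct, and each of them meets the
strange set, which leaves `C(N, r+1) - C(N-s, r+1)` candidates. Summing the defining lower bound
on `w` over the strange units gives the claim.
-/

open Finset

namespace LeaveROut

variable {α : Type*} [Fintype α] [DecidableEq α]

theorem card_filter_injective_forall_mem (r : ℕ) (u : Finset α) :
    #{f : Fin r → α | Function.Injective f ∧ ∀ j, f j ∈ u} = (#u).descFactorial r := by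
  calc _ = Fintype.card (Fin r ↪ u) :=
        card_bij' (fun f hf => ⟨fun j => ⟨f j, (mem_filter.1 hf).2.2 j⟩,
            fun a b hab => (mem_filter.1 hf).2.1 (congrArg Subtype.val hab)⟩)
          (fun e _ => fun j => (e j : α)) (fun _ _ => mem_univ _)
          (fun e _ => mem_filter.2 ⟨mem_univ _, fun a b hab => e.injective (Subtype.ext hab),
            fun j => (e j).2⟩)
          (fun _ _ => rfl) (fun _ _ => rfl)
    _ = _ := by rw [Fintype.card_embedding_eq, Fintype.card_coe, Fintype.card_fin]

theorem card_powersetCard_filter_not_disjoint (k : ℕ) (S : Finset α) :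
    #{t ∈ powersetCard k (univ : Finset α) | ¬Disjoint t S} =
      (Fintype.card α).choose k - (Fintype.card α - #S).choose k := by
  have hdisj : {t ∈ powersetCard k (univ : Finset α) | Disjoint t S} = powersetCard k Sᶜ := by
    ext t
    simp [mem_powersetCard, subset_compl_iff_disjoint_right, and_comm]
  have hsplit := card_filter_add_card_filter_not (s := powersetCard k (univ : Finset α))
    (fun t => Disjoint t S)
  rw [hdisj, card_powersetCard, card_powersetCard, card_compl, card_univ] at hsplit
  omega

variable (W : Finset α → Option α)

def winningTuples (r : ℕ) (i : α) : Finset (Fin r → α) :=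
  {f | Function.Injective f ∧ (∀ j, f j ≠ i) ∧ W (insert i (image f univ)) = some i}

def wonSets (k : ℕ) (i : α) : Finset (Finset α) :=
  {t ∈ powersetCard k (univ : Finset α) | W t = some i}

theorem card_winningTuples_le (hW : ∀ t i, W t = some i → i ∈ t) (r : ℕ) (i : α) :
    #(winningTuples W r i) ≤ r.factorial * #(wonSets W (r + 1) i) := by
  refine card_le_mul_card_image_of_maps_to (f := fun f => insert i (image f univ)) ?_ _ ?_
  · intro f hf
    obtain ⟨-, hinj, hne, hwin⟩ := mem_filter.1 hf
    refine mem_filter.2 ⟨mem_powersetCard_univ.2 ?_, hwin⟩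
    rw [card_insert_of_notMem (by simpa using hne), card_image_of_injective _ hinj,
      card_univ, Fintype.card_fin]
  · intro t ht
    obtain ⟨htk, hwin⟩ := mem_filter.1 ht
    have hcard : #(t.erase i) = r := by
      rw [card_erase_of_mem (hW t i hwin), mem_powersetCard_univ.1 htk, Nat.add_sub_cancel]
    calc _ ≤ #{f : Fin r → α | Function.Injective f ∧ ∀ j, f j ∈ t.erase i} := by
          refine card_le_card fun f hf => ?_
          obtain ⟨hfwin, rfl⟩ := mem_filter.1 hf
          obtain ⟨-, hinj, hne, -⟩ := mem_filter.1 hfwin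
          exact mem_filter.2 ⟨mem_univ _, hinj, fun j => mem_erase.2 ⟨hne j, by simp⟩⟩
      _ = r.factorial := by
          rw [card_filter_injective_forall_mem, hcard, Nat.descFactorial_self]

theorem sum_card_wonSets_le (hW : ∀ t i, W t = some i → i ∈ t) (k : ℕ) (S : Finset α) :
    ∑ i ∈ S, #(wonSets W k i) ≤ #{t ∈ powersetCard k (univ : Finset α) | ¬Disjoint t S} := by
  rw [← card_biUnion]
  · refine card_le_card fun t ht => ?_
    obtain ⟨i, hiS, hit⟩ := mem_biUnion.1 ht
    obtain ⟨htk, hwin⟩ := mem_filter.1 hit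
    exact mem_filter.2 ⟨htk, not_disjoint_iff.2 ⟨i, hW t i hwin, hiS⟩⟩
  · intro i _ j _ hij
    refine disjoint_left.2 fun t hti htj => hij ?_
    exact Option.some_injective _ ((mem_filter.1 hti).2.symm.trans (mem_filter.1 htj).2)

end LeaveROut

open LeaveROut in
theorem lro_strange_bound_general (N r : ℕ)
    (W : Finset (Fin N) → Option (Fin N))
    (hW : ∀ t : Finset (Fin N), ∀ i : Fin N, W t = some i → i ∈ t)
    (α : ℝ)
    (w : Fin N → ℕ)
    (hw : ∀ i₀ : Fin N, w i₀ =
      (Finset.univ.filter (fun f : Fin r → Fin N =>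
        Function.Injective f ∧ (∀ j : Fin r, f j ≠ i₀) ∧
          W (insert i₀ (Finset.image f Finset.univ)) = some i₀)).card)
    (S : Finset (Fin N))
    (hS : S = Finset.univ.filter (fun i₀ : Fin N =>
      (1 - α) * ((N - 1).descFactorial r : ℝ) ≤ (w i₀ : ℝ)))
    (s : ℕ) (hs : s = S.card) :
    (1 - α) * (s : ℝ) * ((N - 1).descFactorial r : ℝ) ≤
      (r.factorial : ℝ) * ((N.choose (r + 1) : ℝ) - ((N - s).choose (r + 1) : ℝ)) := by
  have hstrange : (1 - α) * s * ((N - 1).descFactorial r : ℝ) ≤ ∑ i ∈ S, (w i : ℝ) := by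
    have := card_nsmul_le_sum S (fun i => (w i : ℝ)) _ fun i hi => by
      rw [hS] at hi
      exact (mem_filter.1 hi).2
    rw [nsmul_eq_mul, ← hs] at this
    linarith
  have hcount : ∑ i ∈ S, w i ≤ r.factorial * (N.choose (r + 1) - (N - s).choose (r + 1)) :=
    calc ∑ i ∈ S, w i ≤ ∑ i ∈ S, r.factorial * #(wonSets W (r + 1) i) :=
          sum_le_sum fun i _ => (hw i).trans_le (card_winningTuples_le W hW r i)
      _ ≤ r.factorial * #{t ∈ powersetCard (r + 1) univ | ¬Disjoint t S} := by
          rw [← mul_sum]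
          exact Nat.mul_le_mul_left _ (sum_card_wonSets_le W hW _ S)
      _ = _ := by rw [card_powersetCard_filter_not_disjoint, Fintype.card_fin, hs]
  calc _ ≤ ∑ i ∈ S, (w i : ℝ) := hstrange
    _ ≤ _ := by
      rw [← Nat.cast_sub (Nat.choose_le_choose _ (N.sub_le s))]
      exact_mod_cast hcount

/-- Leave-r-out strange point bound: if `W` assigns to each `(r+1)`-subset of `[N]`
at most one winner from the subset, `w i₀` counts ordered `r`-tuples of distinct
units in `[N] \ {i₀}` such that `i₀` wins, and `s` is the number of units `i₀` with
`w i₀ ≥ (1-α)(N-1)!/(N-r-1)!`, then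
`(1-α) s (N-1)!/(N-r-1)! ≤ r! (C(N,r+1) - C(N-s,r+1))`. -/
theorem lro_strange_bound (N r : ℕ) (hr : 1 ≤ r) (hrN : r < N)
    (W : Finset (Fin N) → Option (Fin N))
    (hW : ∀ t : Finset (Fin N), ∀ i : Fin N, W t = some i → i ∈ t)
    (α : ℝ) (hα0 : 0 < α) (hα1 : α < (r : ℝ) / ((r : ℝ) + 1))
    (w : Fin N → ℕ)
    (hw : ∀ i₀ : Fin N, w i₀ =
      (Finset.univ.filter (fun f : Fin r → Fin N =>
        Function.Injective f ∧ (∀ j : Fin r, f j ≠ i₀) ∧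
          W (insert i₀ (Finset.image f Finset.univ)) = some i₀)).card)
    (S : Finset (Fin N))
    (hS : S = Finset.univ.filter (fun i₀ : Fin N =>
      (1 - α) * ((N - 1).descFactorial r : ℝ) ≤ (w i₀ : ℝ)))
    (s : ℕ) (hs : s = S.card) :
    (1 - α) * (s : ℝ) * ((N - 1).descFactorial r : ℝ) ≤
      (r.factorial : ℝ) * ((N.choose (r + 1) : ℝ) - ((N - s).choose (r + 1) : ℝ)) :=
  lro_strange_bound_general N r W hW α w hw S hS s hs
end

section
/- Weighted strange point inequality: Let N ≥ 3, let π₁,…,π_N be nonnegative reals summing to 1, and let W assign to each 3-subset of [N] at most one winner. Fix α ∈ (0,1) and call unit k strange if Σ_{i≠j, i,j ≠ k} π_i π_j · I{k wins {i,j,k}} ≥ (1−α)·((1−π_k)² − Σ_{l≠k} π_l²). Let S be the set of strange units and β = Σ_{k∈S} π_k. Then (1/3)β³ − β² + β·[Σ_{i∈S} π_i² + α(1 − Σ_{l=1}^N π_l²)] ≥ (4/3 − 2α)·Σ_{i∈S} π_i³ − (1−2α)·Σ_{i∈S} π_i². -/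
/-!
Let `L k` (`winnerPairMass π W k`) be the `π ⊗ π`-mass of the ordered pairs `(i, j)` that `k`
beats in `{i, j, k}`. Then `Y = ∑_{k ∈ S} π_k L k` is the `π ⊗ π ⊗ π`-mass of the ordered
distinct triples whose first entry wins and lies in `S`, and strangeness gives
`Y ≥ (1 - α) ∑_{k ∈ S} π_k ((1 - π_k)² - ∑_{l ≠ k} π_l²)`.
A triple has at most one winner, so at most one of its three cyclic rotations is counted in `Y`;
hence `3 Y` is at most the mass of the ordered distinct triples meeting `S`, i.e. the mass of all
distinct triples minus that of the distinct triples inside `Sᶜ`. Both are power-sum polynomials: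
`∑_{i,j,k distinct} g_i g_j g_k = p₁³ - 3 p₁ p₂ + 2 p₃`. Comparing the two bounds on `Y` gives
the inequality.
-/

open Finset

section Cyclic

variable {ι : Type*} [Fintype ι]

theorem sum_triple_rotate {M : Type*} [AddCommMonoid M] (f : ι → ι → ι → M) :
    ∑ a, ∑ b, ∑ c, f b c a = ∑ a, ∑ b, ∑ c, f a b c := by
  rw [sum_comm]
  exact sum_congr rfl fun _ _ => sum_comm

theorem three_mul_sum_le_of_cyclic {R : Type*} [CommSemiring R] [PartialOrder R]
    [IsOrderedAddMonoid R] (f h : ι → ι → ι → R)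
    (hfh : ∀ a b c, f a b c + f b c a + f c a b ≤ h a b c) :
    3 * ∑ a, ∑ b, ∑ c, f a b c ≤ ∑ a, ∑ b, ∑ c, h a b c :=
  calc 3 * ∑ a, ∑ b, ∑ c, f a b c
      = ∑ a, ∑ b, ∑ c, (f a b c + f b c a + f c a b) := by
        simp only [sum_add_distrib]
        rw [sum_triple_rotate fun a b c => f b c a, sum_triple_rotate f]
        ring
    _ ≤ ∑ a, ∑ b, ∑ c, h a b c :=
        sum_le_sum fun a _ => sum_le_sum fun b _ => sum_le_sum fun c _ => hfh a b c

end Cyclic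

variable {ι : Type*} [DecidableEq ι]

theorem winner_cyclic_le (π : ι → ℝ) (hπ : ∀ i, 0 ≤ π i) (W : Finset ι → Option ι)
    (S : Finset ι) (a b c : ι) :
    ((if a ∈ S ∧ (b ≠ c ∧ b ≠ a ∧ c ≠ a) ∧ W {b, c, a} = some a then π a * π b * π c else 0) +
      (if b ∈ S ∧ (c ≠ a ∧ c ≠ b ∧ a ≠ b) ∧ W {c, a, b} = some b then π b * π c * π a else 0) +
      (if c ∈ S ∧ (a ≠ b ∧ a ≠ c ∧ b ≠ c) ∧ W {a, b, c} = some c then π c * π a * π b else 0)) ≤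
      if (a ≠ b ∧ a ≠ c ∧ b ≠ c) ∧ (a ∈ S ∨ b ∈ S ∨ c ∈ S) then π a * π b * π c else 0 := by
  have hbca : ({b, c, a} : Finset ι) = {a, b, c} := by
    ext; simp only [mem_insert, mem_singleton]; tauto
  have hcab : ({c, a, b} : Finset ι) = {a, b, c} := by
    ext; simp only [mem_insert, mem_singleton]; tauto
  have hπabc : 0 ≤ π a * π b * π c := mul_nonneg (mul_nonneg (hπ a) (hπ b)) (hπ c)
  rw [hbca, hcab]
  -- `W {a, b, c}` is a single value, so at most one of the three conditions holds.
  split_ifs <;> grind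

variable [Fintype ι]

theorem sum_ite_mem_zero {M : Type*} [AddCommGroup M] (g : ι → M) (S : Finset ι) :
    ∑ l, (if l ∈ S then 0 else g l) = ∑ l, g l - ∑ l ∈ S, g l := by
  simp only [sum_ite, subset_univ, filter_mem_eq_of_subset, sum_const_zero, filter_not,
    sum_sdiff_eq_sub, zero_add]

theorem sum_pow_ite_mem_zero {R : Type*} [CommRing R] (g : ι → R) (S : Finset ι) {m : ℕ}
    (hm : m ≠ 0) :
    ∑ l, (if l ∈ S then 0 else g l) ^ m = ∑ l, g l ^ m - ∑ l ∈ S, g l ^ m := by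
  simp only [ite_pow, zero_pow hm]
  exact sum_ite_mem_zero _ S

theorem sum_ite_ne_and_ne_of_ne {R : Type*} [CommRing R] (g : ι → R) {i j : ι} (hij : i ≠ j) :
    ∑ k, (if i ≠ k ∧ j ≠ k then g k else 0) = ∑ k, g k - g i - g j := by
  rw [← sum_filter]
  have hfilter : univ.filter (fun k => i ≠ k ∧ j ≠ k) = (univ.erase i).erase j := by
    ext k; simp [eq_comm, and_comm]
  rw [hfilter, sum_erase_eq_sub (by simp [hij.symm]), sum_erase_eq_sub (mem_univ i)]

theorem sum_distinct_triples {R : Type*} [CommRing R] (g : ι → R) :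
    ∑ i, ∑ j, ∑ k, (if i ≠ j ∧ i ≠ k ∧ j ≠ k then g i * g j * g k else 0) =
      (∑ i, g i) ^ 3 - 3 * (∑ i, g i) * ∑ i, g i ^ 2 + 2 * ∑ i, g i ^ 3 := by
  have inner (i j : ι) : ∑ k, (if i ≠ j ∧ i ≠ k ∧ j ≠ k then g i * g j * g k else 0) =
      if i ≠ j then g i * g j * (∑ k, g k - g i - g j) else 0 := by
    split_ifs with hij
    · rw [← sum_ite_ne_and_ne_of_ne g hij, mul_sum]
      simp only [hij, ne_eq, not_false_eq_true, true_and, mul_ite, mul_zero]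
    · simp [hij]
  have row (i : ι) : ∑ j, (if i ≠ j then g i * g j * (∑ k, g k - g i - g j) else 0) =
      (∑ k, g k) ^ 2 * g i - 2 * (∑ k, g k) * g i ^ 2 + 2 * g i ^ 3 - (∑ k, g k ^ 2) * g i := by
    have hall : ∑ j, g i * g j * (∑ k, g k - g i - g j) =
        g i * (∑ k, g k - g i) * ∑ k, g k - g i * ∑ k, g k ^ 2 := by
      rw [mul_sum, mul_sum, ← sum_sub_distrib]
      exact sum_congr rfl fun j _ => by ring
    rw [← sum_filter, filter_ne, sum_erase_eq_sub (mem_univ i), hall]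
    ring
  simp only [inner, row, sum_add_distrib, sum_sub_distrib, ← mul_sum]
  ring

theorem sum_distinct_triples_meeting {R : Type*} [CommRing R] (g : ι → R) (S : Finset ι) :
    ∑ a, ∑ b, ∑ c,
        (if (a ≠ b ∧ a ≠ c ∧ b ≠ c) ∧ (a ∈ S ∨ b ∈ S ∨ c ∈ S) then g a * g b * g c else 0) =
      ∑ a, ∑ b, ∑ c, (if a ≠ b ∧ a ≠ c ∧ b ≠ c then g a * g b * g c else 0) -
        ∑ a, ∑ b, ∑ c, (if a ≠ b ∧ a ≠ c ∧ b ≠ c then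
          (if a ∈ S then 0 else g a) * (if b ∈ S then 0 else g b) * (if c ∈ S then 0 else g c)
          else 0) := by
  simp only [← sum_sub_distrib]
  refine sum_congr rfl fun a _ => sum_congr rfl fun b _ => sum_congr rfl fun c _ => ?_
  by_cases ha : a ∈ S <;> by_cases hb : b ∈ S <;> by_cases hc : c ∈ S <;> simp [ha, hb, hc]

def winnerPairMass (π : ι → ℝ) (W : Finset ι → Option ι) (k : ι) : ℝ :=
  ∑ p ∈ univ.filter (fun p : ι × ι => p.1 ≠ p.2 ∧ p.1 ≠ k ∧ p.2 ≠ k),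
    π p.1 * π p.2 * (if W {p.1, p.2, k} = some k then (1 : ℝ) else 0)

theorem sum_mul_winnerPairMass (π : ι → ℝ) (W : Finset ι → Option ι) (S : Finset ι) :
    ∑ k ∈ S, π k * winnerPairMass π W k =
      ∑ a, ∑ b, ∑ c, if a ∈ S ∧ (b ≠ c ∧ b ≠ a ∧ c ≠ a) ∧ W {b, c, a} = some a
        then π a * π b * π c else 0 := by
  rw [← univ_inter S, ← sum_ite_mem]
  refine sum_congr rfl fun a _ => ?_
  by_cases ha : a ∈ S
  · simp only [ha, if_true, winnerPairMass, sum_filter, Fintype.sum_prod_type, mul_sum]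
    refine sum_congr rfl fun b _ => sum_congr rfl fun c _ => ?_
    split_ifs <;> simp_all
    ring
  · simp [ha]

theorem three_mul_sum_mul_winnerPairMass_le (π : ι → ℝ) (hπ : ∀ i, 0 ≤ π i)
    (W : Finset ι → Option ι) (S : Finset ι) :
    3 * ∑ k ∈ S, π k * winnerPairMass π W k ≤
      ∑ a, ∑ b, ∑ c,
        (if (a ≠ b ∧ a ≠ c ∧ b ≠ c) ∧ (a ∈ S ∨ b ∈ S ∨ c ∈ S) then π a * π b * π c else 0) := by
  rw [sum_mul_winnerPairMass]
  exact three_mul_sum_le_of_cyclic _ _ (winner_cyclic_le π hπ W S)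

theorem weighted_lto_strange_bound_general (N : ℕ)
    (π : Fin N → ℝ) (hπ0 : ∀ i, 0 ≤ π i) (hπ1 : ∑ i, π i = 1)
    (W : Finset (Fin N) → Option (Fin N))
    (α : ℝ)
    (S : Finset (Fin N))
    (hS : S = Finset.univ.filter (fun k : Fin N =>
      (1 - α) * ((1 - π k) ^ 2 - ∑ l ∈ Finset.univ.filter (fun l => l ≠ k), π l ^ 2) ≤
        ∑ p ∈ Finset.univ.filter (fun p : Fin N × Fin N =>
          p.1 ≠ p.2 ∧ p.1 ≠ k ∧ p.2 ≠ k),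
          π p.1 * π p.2 * (if W {p.1, p.2, k} = some k then (1 : ℝ) else 0)))
    (β : ℝ) (hβ : β = ∑ k ∈ S, π k) :
    (4 / 3 - 2 * α) * ∑ i ∈ S, π i ^ 3 - (1 - 2 * α) * ∑ i ∈ S, π i ^ 2 ≤
      (1 / 3) * β ^ 3 - β ^ 2 +
        β * (∑ i ∈ S, π i ^ 2 + α * (1 - ∑ l, π l ^ 2)) := by
  have hstrange (k : Fin N) (hk : k ∈ S) :
      π k * ((1 - α) * ((1 - π k) ^ 2 - (∑ l, π l ^ 2 - π k ^ 2))) ≤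
        π k * winnerPairMass π W k := by
    rw [hS, mem_filter, filter_ne', sum_erase_eq_sub (mem_univ k)] at hk
    exact mul_le_mul_of_nonneg_left hk.2 (hπ0 k)
  have hlower : (1 - α) * (β - 2 * ∑ i ∈ S, π i ^ 2 + 2 * ∑ i ∈ S, π i ^ 3 - β * ∑ l, π l ^ 2) ≤
      ∑ k ∈ S, π k * winnerPairMass π W k := by
    refine le_of_eq_of_le ?_ (sum_le_sum hstrange)
    have hexpand (k : Fin N) : π k * ((1 - α) * ((1 - π k) ^ 2 - (∑ l, π l ^ 2 - π k ^ 2))) =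
        (1 - α) * π k - 2 * (1 - α) * π k ^ 2 + 2 * (1 - α) * π k ^ 3 -
          (1 - α) * (∑ l, π l ^ 2) * π k := by ring
    simp only [hexpand, sum_sub_distrib, sum_add_distrib, ← mul_sum, hβ]
    ring
  have hupper := three_mul_sum_mul_winnerPairMass_le π hπ0 W S
  rw [sum_distinct_triples_meeting, sum_distinct_triples, sum_distinct_triples, sum_ite_mem_zero,
    sum_pow_ite_mem_zero _ _ two_ne_zero, sum_pow_ite_mem_zero _ _ three_ne_zero, hπ1, ← hβ]
    at hupper
  linear_combination hlower + hupper / 3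

/-- Weighted strange point inequality: with nonnegative weights `π` summing to 1,
a winner function `W` on 3-subsets of `[N]`, and strange units `k` those with
`∑_{i≠j, i,j≠k} π_i π_j 1{k wins {i,j,k}} ≥ (1-α)((1-π_k)² - ∑_{l≠k} π_l²)`,
the total strange weight `β = ∑_{k∈S} π_k` satisfies
`(1/3)β³ - β² + β(∑_{i∈S} π_i² + α(1 - ∑_l π_l²))
  ≥ (4/3 - 2α) ∑_{i∈S} π_i³ - (1-2α) ∑_{i∈S} π_i²`. -/
theorem weighted_lto_strange_bound (N : ℕ) (hN : 3 ≤ N)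
    (π : Fin N → ℝ) (hπ0 : ∀ i, 0 ≤ π i) (hπ1 : ∑ i, π i = 1)
    (W : Finset (Fin N) → Option (Fin N))
    (hW : ∀ t : Finset (Fin N), ∀ i : Fin N, W t = some i → i ∈ t)
    (α : ℝ) (hα0 : 0 < α) (hα1 : α < 1)
    (S : Finset (Fin N))
    (hS : S = Finset.univ.filter (fun k : Fin N =>
      (1 - α) * ((1 - π k) ^ 2 - ∑ l ∈ Finset.univ.filter (fun l => l ≠ k), π l ^ 2) ≤
        ∑ p ∈ Finset.univ.filter (fun p : Fin N × Fin N =>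
          p.1 ≠ p.2 ∧ p.1 ≠ k ∧ p.2 ≠ k),
          π p.1 * π p.2 * (if W {p.1, p.2, k} = some k then (1 : ℝ) else 0)))
    (β : ℝ) (hβ : β = ∑ k ∈ S, π k) :
    (4 / 3 - 2 * α) * ∑ i ∈ S, π i ^ 3 - (1 - 2 * α) * ∑ i ∈ S, π i ^ 2 ≤
      (1 / 3) * β ^ 3 - β ^ 2 +
        β * (∑ i ∈ S, π i ^ 2 + α * (1 - ∑ l, π l ^ 2)) :=
  weighted_lto_strange_bound_general N π hπ0 hπ1 W α S hS β hβ
end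

section
/- Sensitivity analysis bound: Let N ≥ 3, α ≤ 1/3, Γ ∈ [1, N/4], and π₁,…,π_N nonnegative reals summing to 1 with π_i ∈ [1/(ΓN), Γ/N] for all i. Suppose β ∈ [0,1] and a set S ⊂ [N] with β = Σ_{i∈S} π_i satisfy (1/3)β³ − β² + β·[Σ_{i∈S} π_i² + α(1 − Σ_l π_l²)] ≥ (4/3 − 2α)·Σ_{i∈S} π_i³ − (1−2α)·Σ_{i∈S} π_i², with β > 0. Then β ≤ (3 − 3Γ/N − sqrt(9(1−Γ/N)² − 12(−4Γ²/(3N²) + Γ/N + α(1 − (2Γ+1)/N + 2Γ²/N²))))/2. -/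
/-!
Write `c = Γ/N`. Since `α ≤ 1/3` and `c ≤ 1/4`, the map `x ↦ (4/3 - 2α) x² - (1 + β - 2α) x`
is antitone on `[0, c]`, so averaging it against the weights `π_i`, `i ∈ S`, bounds the left
side of the hypothesis below by `β` times its value at `c`. For `α ≥ 0`, Cauchy–Schwarz
`∑ π_l² ≥ 1/N` then turns the hypothesis into `q(β) ≥ 0` for the quadratic
`q(β) = β²/3 - (1 - c) β + K` (with `K` depending on `α`, `c`, `N`), and as `β ≤ 1` lies left
of the vertex of `q`, `β` is at most the smaller root. For `α < 0` the Cauchy–Schwarz step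
points the wrong way. Instead one eliminates `α` between the hypothesis and `q(β) ≥ 0`, both
affine in `α`; the resulting `α`-free inequality holds trivially when `β ≥ c` (where `q` at
`α = 0` is nonpositive) and by a direct estimate when `β < c`.
-/

open Finset

section Moments

variable {ι : Type*} {s : Finset ι} {p : ι → ℝ} {c : ℝ}

lemma sum_sq_le_mul_sum_of_le (hp : ∀ i ∈ s, p i ∈ Set.Icc 0 c) :
    ∑ i ∈ s, p i ^ 2 ≤ c * ∑ i ∈ s, p i := by
  rw [mul_sum]
  refine sum_le_sum fun i hi => ?_
  obtain ⟨h0, hc⟩ := hp i hi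
  nlinarith

/-- `x ↦ a x² - b x` is antitone on `[0, c]` when `0 ≤ a` and `2 a c ≤ b`. -/
lemma sum_mul_quad_le_moments {a b : ℝ} (ha : 0 ≤ a) (hab : 2 * a * c ≤ b)
    (hp : ∀ i ∈ s, p i ∈ Set.Icc 0 c) :
    (∑ i ∈ s, p i) * (a * c ^ 2 - b * c) ≤ a * ∑ i ∈ s, p i ^ 3 - b * ∑ i ∈ s, p i ^ 2 := by
  rw [sum_mul, mul_sum, mul_sum, ← sum_sub_distrib]
  refine sum_le_sum fun i hi => ?_
  obtain ⟨h0, hc⟩ := hp i hi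
  have hslope : 0 ≤ b - a * (p i + c) := by nlinarith [mul_nonneg ha (sub_nonneg.2 hc)]
  nlinarith [mul_nonneg (mul_nonneg h0 (sub_nonneg.2 hc)) hslope]

end Moments

lemma one_div_card_le_sum_sq {ι : Type*} [Fintype ι] {p : ι → ℝ} (hp : ∑ i, p i = 1) :
    1 / Fintype.card ι ≤ ∑ i, p i ^ 2 := by
  have hcs := sq_sum_le_card_mul_sum_sq (s := univ) (f := p)
  rw [hp, card_univ] at hcs
  exact div_le_of_le_mul₀ (by positivity) (by positivity) (by linarith)

lemma sqrt_discrim_le {a b c x : ℝ} (ha : 0 ≤ a) (h : 0 ≤ a * x ^ 2 + b * x + c)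
    (hx : 2 * a * x + b ≤ 0) : √(discrim a b c) ≤ -(2 * a * x + b) :=
  Real.sqrt_le_iff.2 ⟨by linarith, by rw [discrim]; nlinarith [mul_nonneg ha h]⟩

/-- With `c = Γ/N` and `n = 1/N` this is the quadratic of the theorem, divided by `3`. -/
noncomputable def sensitivityQuadratic (c n α β : ℝ) : ℝ :=
  β ^ 2 / 3 - (1 - c) * β + (c - 4 / 3 * c ^ 2 + α * (1 - n - 2 * c + 2 * c ^ 2))

lemma sensitivityQuadratic_zero_eq (c n β : ℝ) :
    sensitivityQuadratic c n 0 β = (c - β) * (3 - 4 * c - β) / 3 := by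
  unfold sensitivityQuadratic
  ring

lemma sensitivityQuadratic_zero_mul_le {c n β S W : ℝ} (hn : 0 ≤ n) (hnc : n ≤ c)
    (hc : c ≤ 1 / 4) (hβ0 : 0 ≤ β) (hβ1 : β ≤ 1) (hS : 0 ≤ S) (hSβ : β * (c - β) / 3 ≤ S)
    (hW0 : 0 ≤ W) (hW : W ≤ β * (c - n)) :
    sensitivityQuadratic c n 0 β * W ≤ (1 - n - 2 * c + 2 * c ^ 2) * S := by
  have hK : (3 - 4 * c) * (c - n) ≤ 1 - n - 2 * c + 2 * c ^ 2 := by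
    nlinarith [mul_nonneg hn (by linarith : (0 : ℝ) ≤ 1 - 2 * c)]
  have hK0 : 0 ≤ 1 - n - 2 * c + 2 * c ^ 2 :=
    le_trans (mul_nonneg (by linarith) (by linarith)) hK
  rw [sensitivityQuadratic_zero_eq]
  rcases le_total c β with hcβ | hβc
  · have hq : (c - β) * (3 - 4 * c - β) / 3 ≤ 0 := by nlinarith
    exact le_trans (mul_nonpos_of_nonpos_of_nonneg hq hW0) (mul_nonneg hK0 hS)
  · have hq : 0 ≤ (c - β) * (3 - 4 * c - β) / 3 := by nlinarith
    calc (c - β) * (3 - 4 * c - β) / 3 * W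
        ≤ (c - β) * (3 - 4 * c) / 3 * (β * (c - n)) := by
          nlinarith [mul_le_mul_of_nonneg_left hW hq, mul_nonneg (sub_nonneg.2 hβc) hβ0,
            mul_nonneg hβ0 (sub_nonneg.2 hnc)]
      _ = β * (c - β) / 3 * ((3 - 4 * c) * (c - n)) := by ring
      _ ≤ S * (1 - n - 2 * c + 2 * c ^ 2) :=
          mul_le_mul hSβ hK (mul_nonneg (by linarith) (by linarith)) hS
      _ = (1 - n - 2 * c + 2 * c ^ 2) * S := mul_comm _ _

section Hypothesis

variable {ι : Type*} {s : Finset ι} {p : ι → ℝ} {c n α P : ℝ}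

lemma sensitivityQuadratic_nonneg_of_nonneg (hp : ∀ i ∈ s, p i ∈ Set.Icc 0 c)
    (hc : c ≤ 1 / 4) (hα0 : 0 ≤ α) (hα : α ≤ 1 / 3) (hnP : n ≤ P) (hβ : 0 < ∑ i ∈ s, p i)
    (h : (4 / 3 - 2 * α) * ∑ i ∈ s, p i ^ 3 - (1 - 2 * α) * ∑ i ∈ s, p i ^ 2 ≤
      (1 / 3) * (∑ i ∈ s, p i) ^ 3 - (∑ i ∈ s, p i) ^ 2 +
        (∑ i ∈ s, p i) * (∑ i ∈ s, p i ^ 2 + α * (1 - P))) :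
    0 ≤ sensitivityQuadratic c n α (∑ i ∈ s, p i) := by
  set β := ∑ i ∈ s, p i
  have hmono := sum_mul_quad_le_moments (a := 4 / 3 - 2 * α) (b := 1 + β - 2 * α)
    (by linarith) (by nlinarith) hp
  refine nonneg_of_mul_nonneg_right ?_ hβ
  unfold sensitivityQuadratic
  nlinarith [mul_nonneg (mul_nonneg hα0 hβ.le) (sub_nonneg.2 hnP)]

lemma sensitivityQuadratic_nonneg_of_neg (hp : ∀ i ∈ s, p i ∈ Set.Icc 0 c)
    (hc : c ≤ 1 / 4) (hα : α < 0) (hn : 0 ≤ n) (hnP : n ≤ P) (hPc : P ≤ c)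
    (hβ0 : 0 < ∑ i ∈ s, p i) (hβ1 : ∑ i ∈ s, p i ≤ 1)
    (h : (4 / 3 - 2 * α) * ∑ i ∈ s, p i ^ 3 - (1 - 2 * α) * ∑ i ∈ s, p i ^ 2 ≤
      (1 / 3) * (∑ i ∈ s, p i) ^ 3 - (∑ i ∈ s, p i) ^ 2 +
        (∑ i ∈ s, p i) * (∑ i ∈ s, p i ^ 2 + α * (1 - P))) :
    0 ≤ sensitivityQuadratic c n α (∑ i ∈ s, p i) := by
  set β := ∑ i ∈ s, p i
  set Q₂ := ∑ i ∈ s, p i ^ 2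
  set Q₃ := ∑ i ∈ s, p i ^ 3
  have hQ₃ : 0 ≤ Q₃ := sum_nonneg fun i hi => pow_nonneg (hp i hi).1 3
  have hQ₂c : Q₂ ≤ c * β := sum_sq_le_mul_sum_of_le hp
  have hQ₂β : Q₂ ≤ β ^ 2 := sum_sq_le_sq_sum_of_nonneg fun i hi => (hp i hi).1
  have hF := sum_mul_quad_le_moments (a := 1) (b := 1) zero_le_one (by linarith) hp
  have hE := sum_mul_quad_le_moments (a := 4 / 3) (b := 2 / 3 + β) (by norm_num)
    (by linarith) hp
  have hK : 0 < 1 - n - 2 * c + 2 * c ^ 2 := by nlinarith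
  -- Write `q` for `sensitivityQuadratic c n`, `K = 1 - n - 2c + 2c²`, `H ≥ 0` for the slack in
  -- `h`, and `S`, `W`, `B` for the expressions in `hS`, the case split and `hB`. Then
  -- `β * q α β = H + S + α W` and, since `B + W = β K`, `B * q α β = K H + (K S - q 0 β * W)`.
  have hSβ : β * (c - β) / 3 ≤ (1 + β) * (c * β - Q₂) - 4 / 3 * (c ^ 2 * β - Q₃) := by
    nlinarith
  have hS : 0 ≤ (1 + β) * (c * β - Q₂) - 4 / 3 * (c ^ 2 * β - Q₃) := by nlinarith
  rcases le_total (β * (P - n) - 2 * (c * (1 - c) * β - Q₂ + Q₃)) 0 with hW | hW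
  · refine nonneg_of_mul_nonneg_right ?_ hβ0
    unfold sensitivityQuadratic
    nlinarith [mul_nonneg_of_nonpos_of_nonpos hα.le hW]
  · have hWle : β * (P - n) - 2 * (c * (1 - c) * β - Q₂ + Q₃) ≤ β * (c - n) := by
      nlinarith [mul_le_mul_of_nonneg_left hPc hβ0.le]
    have hkey := sensitivityQuadratic_zero_mul_le hn (hnP.trans hPc) hc hβ0.le hβ1 hS hSβ hW hWle
    have hB : 0 < β * (1 - P) - 2 * Q₂ + 2 * Q₃ := by
      nlinarith [mul_le_mul_of_nonneg_left hPc hβ0.le]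
    refine nonneg_of_mul_nonneg_right ?_ hB
    unfold sensitivityQuadratic at hkey ⊢
    nlinarith [mul_nonneg hK.le (sub_nonneg.2 h)]

end Hypothesis

theorem sensitivity_bound_general (N : ℕ) (hN : 3 ≤ N)
    (α : ℝ) (hα : α ≤ 1 / 3)
    (Γ : ℝ) (hΓN : Γ ≤ (N : ℝ) / 4)
    (π : Fin N → ℝ) (hπ0 : ∀ i, 0 ≤ π i) (hπ1 : ∑ i, π i = 1)
    (hπub : ∀ i, π i ≤ Γ / (N : ℝ))
    (S : Finset (Fin N)) (β : ℝ) (hβS : β = ∑ i ∈ S, π i)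
    (hβ0 : 0 < β) (hβ1 : β ≤ 1)
    (h : (4 / 3 - 2 * α) * ∑ i ∈ S, π i ^ 3 - (1 - 2 * α) * ∑ i ∈ S, π i ^ 2 ≤
      (1 / 3) * β ^ 3 - β ^ 2 +
        β * (∑ i ∈ S, π i ^ 2 + α * (1 - ∑ l, π l ^ 2))) :
    β ≤ (3 - 3 * Γ / (N : ℝ) -
      Real.sqrt (9 * (1 - Γ / (N : ℝ)) ^ 2 -
        12 * (-(4 * Γ ^ 2 / (3 * (N : ℝ) ^ 2)) + Γ / (N : ℝ)
          + α * (1 - (2 * Γ + 1) / (N : ℝ) + 2 * Γ ^ 2 / (N : ℝ) ^ 2)))) / 2 := by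
  have hN0 : (0 : ℝ) < N := Nat.cast_pos.2 (by omega)
  have hc : Γ / N ≤ 1 / 4 := by rw [div_le_iff₀ hN0]; linarith
  have hp : ∀ i ∈ S, π i ∈ Set.Icc 0 (Γ / N) := fun i _ => ⟨hπ0 i, hπub i⟩
  have hnP : 1 / (N : ℝ) ≤ ∑ l, π l ^ 2 := by simpa using one_div_card_le_sum_sq hπ1
  have hPc : ∑ l, π l ^ 2 ≤ Γ / N := by
    simpa [hπ1] using sum_sq_le_mul_sum_of_le fun i (_ : i ∈ univ) => ⟨hπ0 i, hπub i⟩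
  subst hβS
  have hq : 0 ≤ sensitivityQuadratic (Γ / N) (1 / N) α (∑ i ∈ S, π i) := by
    rcases le_or_gt 0 α with hα0 | hα0
    · exact sensitivityQuadratic_nonneg_of_nonneg hp hc hα0 hα hnP hβ0 h
    · exact sensitivityQuadratic_nonneg_of_neg hp hc hα0 (by positivity) hnP hPc hβ0 hβ1 h
  have hroot := sqrt_discrim_le (a := 1) (b := -3 * (1 - Γ / N))
    (c := 3 * (sensitivityQuadratic (Γ / N) (1 / N) α 0)) (x := ∑ i ∈ S, π i) zero_le_one
    (by unfold sensitivityQuadratic at hq ⊢; linarith) (by linarith)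
  have hdisc : discrim 1 (-3 * (1 - Γ / N)) (3 * sensitivityQuadratic (Γ / N) (1 / N) α 0) =
      9 * (1 - Γ / (N : ℝ)) ^ 2 - 12 * (-(4 * Γ ^ 2 / (3 * (N : ℝ) ^ 2)) + Γ / (N : ℝ)
        + α * (1 - (2 * Γ + 1) / (N : ℝ) + 2 * Γ ^ 2 / (N : ℝ) ^ 2)) := by
    unfold discrim sensitivityQuadratic
    ring
  rw [hdisc] at hroot
  linarith [mul_div_assoc 3 Γ (N : ℝ)]

/-- Sensitivity analysis bound: for `N ≥ 3`, `α ≤ 1/3`, `Γ ∈ [1, N/4]`, weights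
`π_i ∈ [1/(ΓN), Γ/N]` nonnegative summing to 1, if `β ∈ (0,1]` with
`β = ∑_{i∈S} π_i` satisfies the key weighted cubic inequality, then `β` is bounded
by the smaller root of the associated quadratic. -/
theorem sensitivity_bound (N : ℕ) (hN : 3 ≤ N)
    (α : ℝ) (hα : α ≤ 1 / 3)
    (Γ : ℝ) (hΓ1 : 1 ≤ Γ) (hΓN : Γ ≤ (N : ℝ) / 4)
    (π : Fin N → ℝ) (hπ0 : ∀ i, 0 ≤ π i) (hπ1 : ∑ i, π i = 1)
    (hπlb : ∀ i, 1 / (Γ * (N : ℝ)) ≤ π i) (hπub : ∀ i, π i ≤ Γ / (N : ℝ))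
    (S : Finset (Fin N)) (β : ℝ) (hβS : β = ∑ i ∈ S, π i)
    (hβ0 : 0 < β) (hβ1 : β ≤ 1)
    (h : (4 / 3 - 2 * α) * ∑ i ∈ S, π i ^ 3 - (1 - 2 * α) * ∑ i ∈ S, π i ^ 2 ≤
      (1 / 3) * β ^ 3 - β ^ 2 +
        β * (∑ i ∈ S, π i ^ 2 + α * (1 - ∑ l, π l ^ 2))) :
    β ≤ (3 - 3 * Γ / (N : ℝ) -
      Real.sqrt (9 * (1 - Γ / (N : ℝ)) ^ 2 -
        12 * (-(4 * Γ ^ 2 / (3 * (N : ℝ) ^ 2)) + Γ / (N : ℝ)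
          + α * (1 - (2 * Γ + 1) / (N : ℝ) + 2 * Γ ^ 2 / (N : ℝ) ^ 2)))) / 2 :=
  sensitivity_bound_general N hN α hα Γ hΓN π hπ0 hπ1 hπub S β hβS hβ0 hβ1 h
end
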